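/- arXiv:2107.13061 — 4 statements merged into one kernel-verified Lean document; each statement's English description precedes it below -/
import Mathlib

section
/- Let a, b be real numbers with 3 ≤ a < b. Then for every even integer j = 2s, s ≥ 1, the value of φ_{a,b} at ρ_j is nonnegative: φ_{a,b}(ρ_j) ≥ 0, where ρ_j := q_2 q_3 ⋯ q_j √(q_{j+1}) = a^s b^{s-1} √b. -/
open scoped Classical

/-- Taylor coefficients of `f_{a,b}`: `a₀ = a₁ = 1`,
`aₖ = aₖ₋₁² / (aₖ₋₂ · qₖ)` where `qₖ = a` for even `k` and `qₖ = b` for odd `k`. -/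
noncomputable def coeffAB (a b : ℝ) : ℕ → ℝ
  | 0 => 1
  | 1 => 1
  | n + 2 => (coeffAB a b (n + 1)) ^ 2 / (coeffAB a b n * (if Even n then a else b))

/-- The entire function `f_{a,b}(z) = Σ aₖ zᵏ` (as a function on `ℂ`). -/
noncomputable def fAB (a b : ℝ) (z : ℂ) : ℂ := ∑' k : ℕ, (coeffAB a b k : ℂ) * z ^ k

/-- The restriction of `f_{a,b}` to the reals. -/
noncomputable def fABReal (a b x : ℝ) : ℝ := ∑' k : ℕ, coeffAB a b k * x ^ k

/-- `φ_{a,b}(x) = f_{a,b}(-x) = Σ (-1)ᵏ aₖ xᵏ` (real variable). -/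
noncomputable def phiAB (a b x : ℝ) : ℝ := ∑' k : ℕ, (-1 : ℝ) ^ k * coeffAB a b k * x ^ k

/-- `φ_{a,b}` as a function of a complex variable. -/
noncomputable def phiABC (a b : ℝ) (z : ℂ) : ℂ :=
  ∑' k : ℕ, (-1 : ℂ) ^ k * (coeffAB a b k : ℂ) * z ^ k

/-- Membership in the Laguerre–Pólya class of type I:
`f(z) = c zⁿ e^{βz} ∏ (1 + z/xₖ)` with `c ∈ ℝ`, `β ≥ 0`, `xₖ > 0`, `Σ 1/xₖ < ∞`
(the product over a countable — possibly finite or empty — index set). -/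
def LaguerrePolyaI (f : ℂ → ℂ) : Prop :=
  ∃ (c : ℝ) (n : ℕ) (β : ℝ) (ι : Type) (_ : Countable ι) (x : ι → ℝ),
    0 ≤ β ∧ (∀ i, 0 < x i) ∧ Summable (fun i => (x i)⁻¹) ∧
    ∀ z : ℂ, f z = (c : ℂ) * z ^ n * Complex.exp (β * z) * ∏' i, (1 + z / (x i : ℂ))

/-- The partial theta function `g_t(z) = Σ zᵏ t^{-k²}` (complex variable). -/
noncomputable def partialTheta (t : ℝ) (z : ℂ) : ℂ := ∑' k : ℕ, z ^ k / (t : ℂ) ^ (k ^ 2)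

/-- The partial theta function restricted to the reals. -/
noncomputable def partialThetaReal (t x : ℝ) : ℝ := ∑' k : ℕ, x ^ k / t ^ (k ^ 2)

/-- A function `f : ℂ → ℂ` has only real zeros. -/
def OnlyRealZeros (f : ℂ → ℂ) : Prop := ∀ z : ℂ, f z = 0 → ∃ r : ℝ, z = (r : ℂ)

/-- The constant `q_∞ ≈ 3.2336…`: the infimum of the set
`{t² : t > 1 and g_t has only real zeros}`. -/
noncomputable def qInfty : ℝ :=
  sInf {s : ℝ | ∃ t : ℝ, 1 < t ∧ s = t ^ 2 ∧ OnlyRealZeros (partialTheta t)}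

/-!
Put `x = ρ_{2s}`, `w = √b` and `T_k = a_k x^k`, so that `T_{k+1} / T_k = x / (q₂ ⋯ q_{k+1})`.
Up to index `2s - 2` the terms grow by a factor at least `a b w` at each step, from index
`2s` on they decrease, and around the peak
`T_{2s-2}, …, T_{2s+3} = T_{2s-2} · (1, a w, a b, a w, 1, 1 / (a b w))`.
Bounding the alternating sum of the terms below `2s - 2` by `-T_{2s-2} / (a b w)` and the
alternating tail beyond `2s + 3` by `0` gives
`φ(ρ_{2s}) ≥ T_{2s-2} · (2 - 2 a w + a b - 2 / (a b w))`, which is nonnegative once `3 ≤ a < b`.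
-/

open Finset Filter

section Alternating

variable {f : ℕ → ℝ}

theorem neg_mul_le_sum_range_alternating {r : ℝ} (hf : ∀ k, 0 ≤ f k) (hr₀ : 0 ≤ r)
    (hr₁ : r ≤ 1) {n : ℕ} (hgrowth : ∀ k < 2 * n, f k ≤ r * f (k + 1)) :
    -(r * f (2 * n)) ≤ ∑ k ∈ range (2 * n), (-1) ^ k * f k := by
  induction n with
  | zero => simpa using mul_nonneg hr₀ (hf 0)
  | succ n ih =>
    have ih := ih fun k hk => hgrowth k (by omega)
    have hlast := hgrowth (2 * n + 1) (by omega)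
    have hmid : r * f (2 * n) ≤ f (2 * n) := mul_le_of_le_one_left (hf _) hr₁
    rw [show 2 * (n + 1) = 2 * n + 1 + 1 by ring, sum_range_succ, sum_range_succ,
      pow_succ, pow_mul, neg_one_sq, one_pow]
    linarith

theorem sum_range_alternating_le_tsum_of_antitone_from (hf : Summable f) {n : ℕ}
    (hanti : ∀ k, 2 * n ≤ k → f (k + 1) ≤ f k) :
    ∑ k ∈ range (2 * n + 2), (-1) ^ k * f k ≤ ∑' k, (-1) ^ k * f k := by
  have htail : Antitone fun j => f (j + 2 * n) :=
    antitone_nat_of_succ_le fun j => by simpa [add_right_comm] using hanti (j + 2 * n) (by omega)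
  have hpair := htail.alternating_series_le_tendsto
    ((summable_nat_add_iff (2 * n)).2 hf).tendsto_alternating_series_tsum 1
  rw [← hf.alternating.sum_add_tsum_nat_add (2 * n), sum_range_add]
  simp only [pow_add, pow_mul, neg_one_sq, one_pow, mul_one] at hpair ⊢
  simpa [add_comm (2 * n)] using hpair

theorem le_tsum_alternating_of_peak (hf : Summable f) (hf₀ : ∀ k, 0 ≤ f k)
    {r : ℝ} (hr₀ : 0 ≤ r) (hr₁ : r ≤ 1) {n : ℕ}
    (hgrowth : ∀ k < 2 * n, f k ≤ r * f (k + 1))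
    (hanti : ∀ k, 2 * n + 4 ≤ k → f (k + 1) ≤ f k) :
    (1 - r) * f (2 * n) - f (2 * n + 1) + f (2 * n + 2) - f (2 * n + 3) + f (2 * n + 4)
      - f (2 * n + 5) ≤ ∑' k, (-1) ^ k * f k := by
  have hhead := neg_mul_le_sum_range_alternating hf₀ hr₀ hr₁ hgrowth
  have hsum := sum_range_alternating_le_tsum_of_antitone_from hf (n := n + 2)
    fun k hk => hanti k (by omega)
  simp only [show 2 * (n + 2) + 2 = 2 * n + 6 by ring, sum_range_succ, pow_add, pow_mul,
    neg_one_sq, one_pow, one_mul] at hsum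
  linarith

end Alternating

/-- `qProd a b k = q₂ q₃ ⋯ q_{k+1}`, which is `a_k / a_{k+1}` (`coeffAB_succ_mul_qProd`). -/
noncomputable def qProd (a b : ℝ) (k : ℕ) : ℝ := a ^ ((k + 1) / 2) * b ^ (k / 2)

noncomputable def powTerm (a b x : ℝ) (k : ℕ) : ℝ := coeffAB a b k * x ^ k

theorem phiAB_eq_tsum_powTerm (a b x : ℝ) :
    phiAB a b x = ∑' k, (-1) ^ k * powTerm a b x k := by
  simp only [phiAB, powTerm, mul_assoc]

section Coefficients

variable {a b : ℝ}

theorem coeffAB_pos (ha : 0 < a) (hb : 0 < b) : ∀ k, 0 < coeffAB a b k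
  | 0 => by simp [coeffAB]
  | 1 => by simp [coeffAB]
  | n + 2 => by
    have hq : 0 < if Even n then a else b := by split_ifs <;> assumption
    exact div_pos (pow_pos (coeffAB_pos ha hb (n + 1)) 2)
      (mul_pos (coeffAB_pos ha hb n) hq)

theorem qProd_pos (ha : 0 < a) (hb : 0 < b) (k : ℕ) : 0 < qProd a b k := by
  unfold qProd; positivity

theorem qProd_two_mul (a b : ℝ) (m : ℕ) : qProd a b (2 * m) = a ^ m * b ^ m := by
  simp only [qProd, show (2 * m + 1) / 2 = m by omega, show 2 * m / 2 = m by omega]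

theorem qProd_two_mul_add_one (a b : ℝ) (m : ℕ) :
    qProd a b (2 * m + 1) = a ^ (m + 1) * b ^ m := by
  simp only [qProd, show (2 * m + 1 + 1) / 2 = m + 1 by omega, show (2 * m + 1) / 2 = m by omega]

theorem qProd_succ (a b : ℝ) (k : ℕ) :
    qProd a b (k + 1) = qProd a b k * if Even k then a else b := by
  rcases Nat.even_or_odd' k with ⟨m, rfl | rfl⟩
  · rw [qProd_two_mul_add_one, qProd_two_mul, if_pos (even_two_mul m)]
    ring
  · rw [show 2 * m + 1 + 1 = 2 * (m + 1) by ring, qProd_two_mul, qProd_two_mul_add_one,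
      if_neg (Nat.not_even_iff_odd.2 (odd_two_mul_add_one m))]
    ring

theorem qProd_add_two (a b : ℝ) (k : ℕ) : qProd a b (k + 2) = qProd a b k * (a * b) := by
  simp only [qProd, show (k + 2 + 1) / 2 = (k + 1) / 2 + 1 by omega,
    show (k + 2) / 2 = k / 2 + 1 by omega, pow_succ]
  ring

theorem qProd_mono (ha : 1 ≤ a) (hb : 1 ≤ b) : Monotone (qProd a b) := fun _ _ hmn =>
  mul_le_mul (pow_le_pow_right₀ ha (Nat.div_le_div_right (by omega)))
    (pow_le_pow_right₀ hb (Nat.div_le_div_right hmn)) (by positivity) (by positivity)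

theorem coeffAB_succ_mul_qProd (ha : 0 < a) (hb : 0 < b) (k : ℕ) :
    coeffAB a b (k + 1) * qProd a b k = coeffAB a b k := by
  induction k with
  | zero => simp [coeffAB, qProd]
  | succ n ih =>
    have h₀ := (coeffAB_pos ha hb n).ne'
    have hq : (if Even n then a else b) ≠ 0 := by split_ifs <;> positivity
    rw [qProd_succ, show coeffAB a b (n + 1 + 1) = coeffAB a b (n + 1) ^ 2 /
      (coeffAB a b n * if Even n then a else b) from rfl]
    field_simp
    rw [← ih]
    ring

theorem powTerm_succ_mul_qProd (ha : 0 < a) (hb : 0 < b) (x : ℝ) (k : ℕ) :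
    powTerm a b x (k + 1) * qProd a b k = powTerm a b x k * x := by
  rw [powTerm, powTerm, ← coeffAB_succ_mul_qProd ha hb k, pow_succ]
  ring

theorem summable_powTerm (ha : 1 < a) (hb : 1 ≤ b) (x : ℝ) : Summable (powTerm a b x) := by
  have ha₀ : 0 < a := by linarith
  have hb₀ : 0 < b := by linarith
  obtain ⟨N, hN⟩ := pow_unbounded_of_one_lt (2 * |x|) ha
  refine summable_of_ratio_norm_eventually_le (r := 1 / 2) (by norm_num) ?_
  filter_upwards [eventually_ge_atTop (2 * N)] with k hk
  have hbig : 2 * |x| ≤ qProd a b k := by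
    calc 2 * |x| ≤ a ^ N := hN.le
      _ = qProd a b (2 * N) / b ^ N := by rw [qProd_two_mul]; field_simp
      _ ≤ qProd a b (2 * N) := div_le_self (qProd_pos ha₀ hb₀ _).le (one_le_pow₀ hb)
      _ ≤ qProd a b k := qProd_mono ha.le hb hk
  have hrel := congrArg abs (powTerm_succ_mul_qProd ha₀ hb₀ x k)
  rw [abs_mul, abs_mul, abs_of_pos (qProd_pos ha₀ hb₀ k)] at hrel
  have hprod := mul_le_mul_of_nonneg_left hbig (abs_nonneg (powTerm a b x k))
  rw [Real.norm_eq_abs, Real.norm_eq_abs]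
  refine le_of_mul_le_mul_right ?_ (qProd_pos ha₀ hb₀ k)
  linarith

theorem powTerm_succ (ha : 0 < a) (hb : 0 < b) (x : ℝ) (k : ℕ) :
    powTerm a b x (k + 1) = powTerm a b x k * x / qProd a b k :=
  eq_div_of_mul_eq (qProd_pos ha hb k).ne' (powTerm_succ_mul_qProd ha hb x k)

theorem powTerm_nonneg (ha : 0 < a) (hb : 0 < b) {x : ℝ} (hx : 0 ≤ x) (k : ℕ) :
    0 ≤ powTerm a b x k :=
  mul_nonneg (coeffAB_pos ha hb k).le (pow_nonneg hx k)

theorem powTerm_le_mul_powTerm_succ (ha : 0 < a) (hb : 0 < b) {x r : ℝ} (hx : 0 ≤ x) {k : ℕ}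
    (h : qProd a b k ≤ r * x) : powTerm a b x k ≤ r * powTerm a b x (k + 1) := by
  rw [powTerm_succ ha hb, ← mul_div_assoc, le_div_iff₀ (qProd_pos ha hb k)]
  nlinarith [powTerm_nonneg ha hb hx k]

theorem powTerm_succ_le (ha : 0 < a) (hb : 0 < b) {x : ℝ} (hx : 0 ≤ x) {k : ℕ}
    (h : x ≤ qProd a b k) : powTerm a b x (k + 1) ≤ powTerm a b x k := by
  rw [powTerm_succ ha hb, div_le_iff₀ (qProd_pos ha hb k)]
  exact mul_le_mul_of_nonneg_left h (powTerm_nonneg ha hb hx k)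

end Coefficients

/-! With `s = m + 1` and `b = w ^ 2`, the point `ρ_{2s}` is `a ^ (m + 1) * (w ^ 2) ^ m * w`. -/

section Rho

variable {a w : ℝ}

theorem qProd_le_inv_mul_rho (ha : 1 ≤ a) (hw : 1 ≤ w) {m k : ℕ} (hk : k < 2 * m) :
    qProd a (w ^ 2) k ≤ (a * w ^ 3)⁻¹ * (a ^ (m + 1) * (w ^ 2) ^ m * w) := by
  have hmono : qProd a (w ^ 2) (k + 2) ≤ qProd a (w ^ 2) (2 * m + 1) :=
    qProd_mono ha (one_le_pow₀ hw) (by omega)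
  rw [qProd_add_two, qProd_two_mul_add_one] at hmono
  rw [show (a * w ^ 3)⁻¹ * (a ^ (m + 1) * (w ^ 2) ^ m * w) = a ^ (m + 1) * (w ^ 2) ^ m / (a * w ^ 2)
    by field_simp]
  rwa [le_div_iff₀ (by positivity)]

theorem rho_le_qProd (ha : 1 ≤ a) (hw : 1 ≤ w) {m k : ℕ} (hk : 2 * m + 2 ≤ k) :
    a ^ (m + 1) * (w ^ 2) ^ m * w ≤ qProd a (w ^ 2) k := by
  calc a ^ (m + 1) * (w ^ 2) ^ m * w ≤ a ^ (m + 1) * (w ^ 2) ^ (m + 1) := by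
        rw [pow_succ (w ^ 2), ← mul_assoc]
        gcongr
        nlinarith
    _ = qProd a (w ^ 2) (2 * m + 2) := by rw [show 2 * m + 2 = 2 * (m + 1) by ring, qProd_two_mul]
    _ ≤ qProd a (w ^ 2) k := qProd_mono ha (one_le_pow₀ hw) hk

theorem powTerm_rho_window (ha : 0 < a) (hw : 0 < w) (m : ℕ) :
    let f := powTerm a (w ^ 2) (a ^ (m + 1) * (w ^ 2) ^ m * w)
    (1 - (a * w ^ 3)⁻¹) * f (2 * m) - f (2 * m + 1) + f (2 * m + 2) - f (2 * m + 3)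
      + f (2 * m + 4) - f (2 * m + 5)
      = f (2 * m) * (2 + a * w * (w - 2) - 2 * (a * w ^ 3)⁻¹) := by
  intro f
  have hb : 0 < w ^ 2 := by positivity
  simp only [f, powTerm_succ ha hb, qProd_add_two, qProd_two_mul, qProd_two_mul_add_one]
  field_simp
  ring

theorem two_le_mul_two_add_mul_sub_two (ha : 3 ≤ a) (hab : a < w ^ 2) (hw : 0 < w) :
    2 ≤ a * w ^ 3 * (2 + a * w * (w - 2)) := by
  have hw1 : 1 < w := by nlinarith
  have hcube : 3 < w ^ 3 := by nlinarith
  have key : 1 / 4 ≤ 2 + a * w * (w - 2) := by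
    rcases le_or_gt 2 w with h | h
    · nlinarith [mul_nonneg (mul_nonneg (by linarith : (0:ℝ) ≤ a) hw.le) (sub_nonneg.2 h)]
    · have : w ^ 2 * w * (w - 2) ≤ a * w * (w - 2) := by
        nlinarith [mul_pos hw (sub_pos.2 h)]
      -- `w ^ 4 - 2 * w ^ 3 + 27 / 16 = (w - 3 / 2) ^ 2 * (w ^ 2 + w + 3 / 4)`
      nlinarith [mul_nonneg (sq_nonneg (w - 3/2)) (by positivity : (0:ℝ) ≤ w ^ 2 + w + 3/4)]
  have h9 : 9 ≤ a * w ^ 3 := by nlinarith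
  nlinarith

end Rho

/-- For `3 ≤ a < b` and every even `j = 2s`, `s ≥ 1`, one has
`φ_{a,b}(ρ_j) ≥ 0` where `ρ_j = aˢ bˢ⁻¹ √b`. -/
theorem phiAB_nonneg_at_rho (a b : ℝ) (ha : 3 ≤ a) (hab : a < b) (s : ℕ) (hs : 1 ≤ s) :
    0 ≤ phiAB a b (a ^ s * b ^ (s - 1) * Real.sqrt b) := by
  obtain ⟨m, rfl⟩ : ∃ m, s = m + 1 := ⟨s - 1, by omega⟩
  obtain ⟨w, hw, rfl⟩ : ∃ w, 0 < w ∧ b = w ^ 2 :=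
    ⟨√b, Real.sqrt_pos.2 (by linarith), (Real.sq_sqrt (by linarith)).symm⟩
  have ha₁ : 1 ≤ a := by linarith
  have ha₀ : 0 < a := by linarith
  have hb : 0 < w ^ 2 := by positivity
  have hw₁ : 1 ≤ w := by nlinarith
  have hx : 0 ≤ a ^ (m + 1) * (w ^ 2) ^ m * w := by positivity
  have hr₁ : (a * w ^ 3)⁻¹ ≤ 1 :=
    inv_le_one_of_one_le₀ (one_le_mul_of_one_le_of_one_le ha₁ (one_le_pow₀ hw₁))
  have hpeak := le_tsum_alternating_of_peak (summable_powTerm (by linarith) (one_le_pow₀ hw₁) _)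
    (powTerm_nonneg ha₀ hb hx) (by positivity) hr₁
    (fun k hk => powTerm_le_mul_powTerm_succ ha₀ hb hx (qProd_le_inv_mul_rho ha₁ hw₁ hk))
    (fun k hk => powTerm_succ_le ha₀ hb hx (rho_le_qProd ha₁ hw₁ (by omega)))
  rw [powTerm_rho_window ha₀ hw m] at hpeak
  have hfactor : 0 ≤ 2 + a * w * (w - 2) - 2 * (a * w ^ 3)⁻¹ := by
    have h := two_le_mul_two_add_mul_sub_two ha hab hw
    rw [sub_nonneg, ← div_eq_mul_inv, div_le_iff₀ (by positivity)]
    linarith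
  rw [Nat.add_sub_cancel, Real.sqrt_sq hw.le, phiAB_eq_tsum_powTerm]
  exact (mul_nonneg (powTerm_nonneg ha₀ hb hx _) hfactor).trans hpeak
end

section
/- Let a, b be real numbers with 3 ≤ a < b. Then for every x ∈ (1, a], φ_{a,b}(x) ≥ Σ_{k=0}^∞ (-1)^k x^k a^{-k(k-1)/2}, and the right-hand side equals g_{√a}(-√a · x), the value of the partial theta function with parameter √a at -√a · x. -/
open scoped Classical

/-! With `θₖ = a^{-k(k-1)/2}`, induction on the recursion gives the closed form
`aₖ = (a/b)^{eₖ} θₖ`, `eₖ = Σ_{j<k} ⌊j/2⌋`, so `0 ≤ aₖ ≤ θₖ` and both series converge by the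
ratio test. The difference `φ_{a,b}(x) - Σ (-x)ᵏ θₖ` is the alternating series of the deficits
`dₖ = θₖ - aₖ` (with `d₀ = d₁ = 0`); grouped as `Σₘ (x^{2m+1} d_{2m+1} - x^{2m+2} d_{2m+2})`
every group is nonnegative, because `e_{2m+1} = m²`, `e_{2m+2} = m(m+1)` and, with `r = a/b`,
Bernoulli's inequality gives `1 - r^{m(m+1)} ≤ m(m+1)(1 - r) ≤ a^{2m}(1 - r^{m²})`.
The identity with `g_{√a}` is `k² = 2·C(k,2) + k`. -/

open Finset

theorem tsum_nonneg_of_pair_nonneg {f : ℕ → ℝ} (hf : Summable f) (h0 : 0 ≤ f 0)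
    (hpair : ∀ m, 0 ≤ f (2 * m + 1) + f (2 * m + 2)) : 0 ≤ ∑' n, f n := by
  have hodd : Summable fun m => f (2 * m + 1) := hf.comp_injective fun _ _ h => by omega
  have heven : Summable fun m => f (2 * m + 2) := hf.comp_injective fun _ _ h => by omega
  have hsum : HasSum f (f 0 + ∑' m, (f (2 * m + 1) + f (2 * m + 2))) := by
    refine HasSum.zero_add ?_
    rw [hodd.tsum_add heven]
    exact hodd.hasSum.even_add_odd heven.hasSum
  rw [hsum.tsum_eq]
  exact add_nonneg h0 (tsum_nonneg hpair)

theorem sum_range_two_mul_add_one_div_two (m : ℕ) :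
    ∑ j ∈ range (2 * m + 1), j / 2 = m * m := by
  induction m with
  | zero => rfl
  | succ m ih =>
    rw [show 2 * (m + 1) + 1 = 2 * m + 1 + 1 + 1 by ring, sum_range_succ, sum_range_succ, ih,
      show (2 * m + 1) / 2 = m by omega, show (2 * m + 1 + 1) / 2 = m + 1 by omega]
    ring

theorem sum_range_two_mul_add_two_div_two (m : ℕ) :
    ∑ j ∈ range (2 * m + 2), j / 2 = m * (m + 1) := by
  rw [sum_range_succ, sum_range_two_mul_add_one_div_two, show (2 * m + 1) / 2 = m by omega]
  ring

theorem choose_two_succ (n : ℕ) : (n + 1).choose 2 = n.choose 2 + n := by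
  rw [Nat.choose_succ_succ', Nat.choose_one_right, add_comm]

theorem sq_eq_two_mul_choose_two_add (k : ℕ) : k ^ 2 = 2 * k.choose 2 + k := by
  induction k with
  | zero => rfl
  | succ k ih =>
    rw [choose_two_succ, add_sq, ih]
    ring

theorem summable_pow_div_pow_choose_two {a : ℝ} (ha : 1 < a) (x : ℝ) :
    Summable fun k : ℕ => x ^ k / a ^ k.choose 2 := by
  refine summable_of_ratio_norm_eventually_le (r := 1 / 2) (by norm_num) ?_
  filter_upwards [(tendsto_pow_atTop_atTop_of_one_lt ha).eventually_ge_atTop (2 * |x|)]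
    with k hk
  have ha₀ : 0 ≤ a := by linarith
  simp only [norm_div, norm_pow, Real.norm_eq_abs, abs_of_nonneg ha₀]
  calc |x| ^ (k + 1) / a ^ (k + 1).choose 2
      = |x| ^ k / a ^ k.choose 2 * (|x| / a ^ k) := by
        rw [choose_two_succ, pow_succ, pow_add]; ring
    _ ≤ |x| ^ k / a ^ k.choose 2 * (1 / 2) := by
        refine mul_le_mul_of_nonneg_left ?_ (by positivity)
        rw [div_le_iff₀ (by positivity)]
        linarith
    _ = 1 / 2 * (|x| ^ k / a ^ k.choose 2) := mul_comm _ _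

theorem coeffAB_eq {a b : ℝ} (ha : a ≠ 0) (hb : b ≠ 0) (n : ℕ) :
    coeffAB a b n = (a / b) ^ (∑ j ∈ range n, j / 2) / a ^ n.choose 2 := by
  induction n using Nat.twoStepInduction with
  | zero => simp [coeffAB]
  | one => simp [coeffAB]
  | more n ih₀ ih₁ =>
    simp only [coeffAB, ih₀, ih₁, sum_range_succ, choose_two_succ]
    rcases Nat.even_or_odd' n with ⟨j, rfl | rfl⟩
    · rw [if_pos (even_two_mul j), show 2 * j / 2 = j by omega,
        show (2 * j + 1) / 2 = j by omega]
      simp only [div_pow, pow_add, pow_succ]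
      field_simp
    · rw [if_neg (Nat.not_even_iff_odd.mpr (odd_two_mul_add_one j)),
        show (2 * j + 1) / 2 = j by omega, show (2 * j + 1 + 1) / 2 = j + 1 by omega]
      simp only [div_pow, pow_add, pow_succ]
      field_simp

theorem one_sub_pow_mul_succ_le {a r : ℝ} (ha : 2 ≤ a) (hr₀ : 0 ≤ r) (hr₁ : r ≤ 1) (m : ℕ) :
    1 - r ^ (m * (m + 1)) ≤ a ^ (2 * m) * (1 - r ^ (m * m)) := by
  rcases m.eq_zero_or_pos with rfl | hm
  · simp
  have hbernoulli : 1 - r ^ (m * (m + 1)) ≤ ((m * (m + 1) : ℕ) : ℝ) * (1 - r) := by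
    linarith [one_add_mul_sub_le_pow (by linarith : -1 ≤ r) (m * (m + 1))]
  have hgrowth : ((m * (m + 1) : ℕ) : ℝ) ≤ a ^ (2 * m) :=
    calc ((m * (m + 1) : ℕ) : ℝ) ≤ ((2 ^ m * 2 ^ m : ℕ) : ℝ) := by
          exact_mod_cast Nat.mul_le_mul m.lt_two_pow_self.le m.lt_two_pow_self
      _ = 2 ^ (2 * m) := by push_cast; ring
      _ ≤ a ^ (2 * m) := pow_le_pow_left₀ zero_le_two ha _
  calc 1 - r ^ (m * (m + 1)) ≤ ((m * (m + 1) : ℕ) : ℝ) * (1 - r) := hbernoulli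
    _ ≤ a ^ (2 * m) * (1 - r) := by gcongr
    _ ≤ a ^ (2 * m) * (1 - r ^ (m * m)) := by
        gcongr
        exact pow_le_of_le_one hr₀ hr₁ (by positivity)

section PhiAB

variable {a b : ℝ}

theorem coeffAB_nonneg (ha : 0 < a) (hb : 0 < b) (n : ℕ) : 0 ≤ coeffAB a b n := by
  rw [coeffAB_eq ha.ne' hb.ne']
  positivity

theorem coeffAB_le (ha : 0 < a) (hab : a ≤ b) (n : ℕ) :
    coeffAB a b n ≤ 1 / a ^ n.choose 2 := by
  have hb : 0 < b := ha.trans_le hab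
  rw [coeffAB_eq ha.ne' hb.ne']
  gcongr
  exact pow_le_one₀ (div_nonneg ha.le hb.le) ((div_le_one hb).mpr hab)

theorem coeffAB_deficit_pair_le (ha : 2 ≤ a) (hab : a ≤ b) {x : ℝ} (hx₀ : 0 ≤ x) (hxa : x ≤ a)
    (m : ℕ) :
    x ^ (2 * m + 2) * (1 / a ^ (2 * m + 2).choose 2 - coeffAB a b (2 * m + 2)) ≤
      x ^ (2 * m + 1) * (1 / a ^ (2 * m + 1).choose 2 - coeffAB a b (2 * m + 1)) := by
  have ha₀ : 0 < a := by linarith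
  have hb₀ : 0 < b := by linarith
  have hr₁ : a / b ≤ 1 := (div_le_one hb₀).mpr hab
  rw [coeffAB_eq ha₀.ne' hb₀.ne', coeffAB_eq ha₀.ne' hb₀.ne', sum_range_two_mul_add_two_div_two,
    sum_range_two_mul_add_one_div_two, show 2 * m + 2 = 2 * m + 1 + 1 from rfl,
    choose_two_succ, pow_add a]
  set A := a ^ (2 * m + 1).choose 2
  have hdeficit : 0 ≤ 1 - (a / b) ^ (m * (m + 1)) :=
    sub_nonneg.mpr (pow_le_one₀ (by positivity) hr₁)
  calc x ^ (2 * m + 1 + 1) *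
        (1 / (A * a ^ (2 * m + 1)) - (a / b) ^ (m * (m + 1)) / (A * a ^ (2 * m + 1)))
      = x ^ (2 * m + 1) / A * (x / a * ((1 - (a / b) ^ (m * (m + 1))) / a ^ (2 * m))) := by
        field_simp
        ring
    _ ≤ x ^ (2 * m + 1) / A * (1 * (1 - (a / b) ^ (m * m))) := by
        gcongr
        · exact (div_le_one ha₀).mpr hxa
        · rw [div_le_iff₀' (by positivity)]
          exact one_sub_pow_mul_succ_le ha (by positivity) hr₁ m
    _ = x ^ (2 * m + 1) * (1 / A - (a / b) ^ (m * m) / A) := by ring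

theorem tsum_neg_pow_div_le_phiAB (ha : 2 ≤ a) (hab : a ≤ b) {x : ℝ} (hx₀ : 0 ≤ x)
    (hxa : x ≤ a) : ∑' k : ℕ, (-x) ^ k / a ^ k.choose 2 ≤ phiAB a b x := by
  have ha₀ : 0 < a := by linarith
  have ha₁ : 1 < a := by linarith
  have hθ := summable_pow_div_pow_choose_two ha₁ (-x)
  have hφ : Summable fun k : ℕ => (-1) ^ k * coeffAB a b k * x ^ k := by
    refine (summable_pow_div_pow_choose_two ha₁ x).of_norm_bounded fun k => ?_
    rw [norm_mul, norm_mul, norm_pow, norm_neg, norm_one, one_pow, one_mul,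
      Real.norm_of_nonneg (coeffAB_nonneg ha₀ (by linarith) k),
      Real.norm_of_nonneg (pow_nonneg hx₀ k)]
    calc coeffAB a b k * x ^ k ≤ 1 / a ^ k.choose 2 * x ^ k := by
          gcongr
          exact coeffAB_le ha₀ hab k
      _ = x ^ k / a ^ k.choose 2 := by ring
  rw [← sub_nonneg, phiAB, ← hφ.tsum_sub hθ]
  refine tsum_nonneg_of_pair_nonneg (hφ.sub hθ) (by simp [coeffAB]) fun m => ?_
  have hodd : (-1 : ℝ) ^ (2 * m + 1) = -1 := (odd_two_mul_add_one m).neg_one_pow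
  have heven : (-1 : ℝ) ^ (2 * m + 2) = 1 := Even.neg_one_pow ⟨m + 1, by ring⟩
  simp only [neg_pow x, hodd, heven]
  linear_combination coeffAB_deficit_pair_le ha hab hx₀ hxa m

end PhiAB

theorem partialThetaReal_sqrt_mul {a : ℝ} (ha : 0 < a) (y : ℝ) :
    partialThetaReal √a (√a * y) = ∑' k : ℕ, y ^ k / a ^ k.choose 2 := by
  refine tsum_congr fun k => ?_
  have hs : √a ≠ 0 := (Real.sqrt_pos.mpr ha).ne'
  rw [sq_eq_two_mul_choose_two_add k, pow_add, pow_mul, Real.sq_sqrt ha.le, mul_pow]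
  field_simp

/-- For `3 ≤ a < b` and `x ∈ (1, a]`,
`φ_{a,b}(x) ≥ Σ (-1)ᵏ xᵏ a^{-k(k-1)/2}`, and the right-hand side equals
`g_{√a}(-√a·x)`. -/
theorem phiAB_ge_partialTheta (a b : ℝ) (ha : 3 ≤ a) (hab : a < b) :
    ∀ x ∈ Set.Ioc (1 : ℝ) a,
      (∑' k : ℕ, (-1 : ℝ) ^ k * x ^ k / a ^ (k * (k - 1) / 2)) ≤ phiAB a b x ∧
      (∑' k : ℕ, (-1 : ℝ) ^ k * x ^ k / a ^ (k * (k - 1) / 2)) =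
        partialThetaReal (Real.sqrt a) (-(Real.sqrt a * x)) := by
  rintro x ⟨hx₁, hxa⟩
  have hterm : ∀ k : ℕ,
      (-1 : ℝ) ^ k * x ^ k / a ^ (k * (k - 1) / 2) = (-x) ^ k / a ^ k.choose 2 := fun k => by rw [Nat.choose_two_right, neg_pow x]
  simp only [hterm]
  exact ⟨tsum_neg_pow_div_le_phiAB (by linarith) hab.le (by linarith) hxa,
    by rw [← mul_neg, partialThetaReal_sqrt_mul (by linarith)]⟩
end

section
/- Let a, b, c be real numbers with 3 ≤ a < c < b. Then for every x ∈ (1, a], φ_{a,c}(x) ≤ φ_{a,b}(x); that is, for fixed a and fixed x ∈ (1, a], the value φ_{a,b}(x) is non-decreasing as a function of the second parameter b on (a, ∞). -/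
open scoped Classical

open Filter

/-! The coefficients are `aₖ = a^{-⌊k²/4⌋} b^{-⌊(k-1)²/4⌋}`, so that
`φ_{a,b}(x) - φ_{a,c}(x) = Σ (-1)^{k+1} dₖ xᵏ` with `dₖ = aₖ(a,c) - aₖ(a,b) ≥ 0`, and `dₖ = 0`
for `k ≤ 2`. From `k ≥ 3` on, passing from `dₖ` to `dₖ₊₁` costs at least a factor `a⁻²` in the
`a`-part, while the `b`-part `pᵐ - qᵐ` (`p = 1/c`, `q = 1/b`, `q ≤ p ≤ 1/2`) decreases in `m ≥ 1`.
Hence for `x ≤ a ≤ a²` the terms `dₖ xᵏ` decrease from `k = 3` on, and an alternating series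
with decreasing terms whose first term is positive has a nonnegative sum. -/

/-- `quarterSquare n = ⌊n² / 4⌋`. -/
def quarterSquare : ℕ → ℕ
  | 0 => 0
  | n + 1 => quarterSquare n + (n + 1) / 2

lemma quarterSquare_add_two_add (n : ℕ) :
    quarterSquare (n + 2) + quarterSquare n =
      2 * quarterSquare (n + 1) + if Even n then 1 else 0 := by
  simp only [quarterSquare]
  split_ifs with h
  · obtain ⟨m, rfl⟩ := h; omega
  · obtain ⟨m, rfl⟩ := Nat.not_even_iff_odd.mp h; omega

lemma quarterSquare_succ_add_pred (n : ℕ) :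
    quarterSquare (n + 1) + quarterSquare (n - 1) =
      2 * quarterSquare n + if Even n then 0 else 1 := by
  cases n with
  | zero => simp [quarterSquare]
  | succ m =>
    have := quarterSquare_add_two_add m
    simp only [Nat.add_sub_cancel, Nat.even_add_one, ite_not] at this ⊢
    omega

lemma pow_sub_pow_antitoneOn {p q : ℝ} (hq : 0 ≤ q) (hqp : q ≤ p) (hpq : p + q ≤ 1) :
    AntitoneOn (fun m : ℕ => p ^ m - q ^ m) (Set.Ici 1) := by
  refine antitoneOn_nat_Ici_of_succ_le fun m hm => ?_
  obtain ⟨j, rfl⟩ := Nat.exists_eq_add_of_le hm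
  have h1 : q * (1 - q) ≤ p * (1 - p) := by nlinarith
  have h2 : q ^ j * (q * (1 - q)) ≤ p ^ j * (p * (1 - p)) :=
    mul_le_mul (pow_le_pow_left₀ hq hqp j) h1 (by nlinarith) (pow_nonneg (hq.trans hqp) j)
  linear_combination h2

theorem Antitone.tsum_alternating_nonneg {E : Type*} [Ring E] [PartialOrder E] [IsOrderedRing E]
    [UniformSpace E] [IsUniformAddGroup E] [CompleteSpace E] [OrderClosedTopology E]
    {f : ℕ → E} (hfa : Antitone f) (hfs : Summable f) : 0 ≤ ∑' n, (-1) ^ n * f n := by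
  simpa using hfa.alternating_series_le_tendsto hfs.tendsto_alternating_series_tsum 0

lemma coeffAB_eq_of_lt_three (a b c : ℝ) {n : ℕ} (hn : n < 3) : coeffAB a b n = coeffAB a c n := by
  interval_cases n <;> simp [coeffAB]

section coeffAB

variable {a b c : ℝ}

/-- Unwinding the recursion, `aₖ = ∏_{2 ≤ j ≤ k} q_j^{-(k-j+1)}`; summing `k - j + 1` over the even
(resp. odd) `j` gives `⌊k²/4⌋` (resp. `⌊(k-1)²/4⌋`). -/
lemma coeffAB_eq_s11 (ha : a ≠ 0) (hb : b ≠ 0) :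
    ∀ n, coeffAB a b n = (a ^ quarterSquare n * b ^ quarterSquare (n - 1))⁻¹
  | 0 => by simp [coeffAB, quarterSquare]
  | 1 => by simp [coeffAB, quarterSquare]
  | n + 2 => by
    have hA := quarterSquare_add_two_add n
    have hB := quarterSquare_succ_add_pred n
    rw [coeffAB, coeffAB_eq_s11 ha hb (n + 1), coeffAB_eq_s11 ha hb n, show n + 2 - 1 = n + 1 by omega,
      show n + 1 - 1 = n by omega]
    have key : a ^ (quarterSquare (n + 2) + quarterSquare n) *
        b ^ (quarterSquare (n + 1) + quarterSquare (n - 1)) =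
        a ^ (2 * quarterSquare (n + 1)) * b ^ (2 * quarterSquare n) *
          if Even n then a else b := by
      rw [hA, hB]; split_ifs <;> ring
    rw [pow_add, pow_add, pow_mul, pow_mul] at key
    field_simp
    linear_combination key

lemma coeffAB_succ (ha : a ≠ 0) (hb : b ≠ 0) (n : ℕ) :
    coeffAB a b (n + 1) = coeffAB a b n * (a ^ ((n + 1) / 2) * b ^ (n / 2))⁻¹ := by
  have hpred : quarterSquare n = quarterSquare (n - 1) + n / 2 := by cases n <;> rfl
  rw [coeffAB_eq_s11 ha hb, coeffAB_eq_s11 ha hb, Nat.add_sub_cancel, quarterSquare, hpred, pow_add,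
    pow_add]
  simp only [mul_inv]
  ring

theorem summable_coeffAB_mul_pow (ha : 1 < a) (hb : 1 ≤ b) (x : ℝ) :
    Summable fun n => coeffAB a b n * x ^ n := by
  refine summable_of_ratio_norm_eventually_le (r := 1 / 2) (by norm_num) ?_
  have hgrow : Tendsto (fun n : ℕ => a ^ ((n + 1) / 2)) atTop atTop :=
    (tendsto_pow_atTop_atTop_of_one_lt ha).comp
      ((Nat.tendsto_div_const_atTop two_ne_zero).comp (tendsto_add_atTop_nat 1))
  filter_upwards [hgrow.eventually_ge_atTop (2 * |x|)] with n hn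
  have hρ : (a ^ ((n + 1) / 2) * b ^ (n / 2))⁻¹ * |x| ≤ 1 / 2 := by
    rw [inv_mul_le_iff₀ (by positivity)]
    nlinarith [one_le_pow₀ hb (n := n / 2), abs_nonneg x]
  have ha₀ : 0 < a := by linarith
  have hb₀ : 0 < b := by linarith
  rw [coeffAB_succ ha₀.ne' hb₀.ne', pow_succ,
    show ∀ c ρ y : ℝ, c * ρ * (y * x) = c * y * (ρ * x) by intros; ring,
    norm_mul (coeffAB a b n * x ^ n), norm_mul _ x, Real.norm_of_nonneg
      (inv_pos.mpr (mul_pos (pow_pos ha₀ _) (pow_pos hb₀ _))).le,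
    Real.norm_eq_abs x, mul_comm (1 / 2 : ℝ)]
  exact mul_le_mul_of_nonneg_left hρ (norm_nonneg _)

lemma coeffAB_le_coeffAB_of_le (ha : 0 < a) (hc : 0 < c) (hcb : c ≤ b) (n : ℕ) :
    coeffAB a b n ≤ coeffAB a c n := by
  rw [coeffAB_eq_s11 ha.ne' (hc.trans_le hcb).ne', coeffAB_eq_s11 ha.ne' hc.ne']
  gcongr

lemma coeffAB_sub_succ_mul_sq_le (ha : 1 ≤ a) (hc : 2 ≤ c) (hcb : c ≤ b) (n : ℕ) :
    (coeffAB a c (n + 4) - coeffAB a b (n + 4)) * a ^ 2 ≤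
      coeffAB a c (n + 3) - coeffAB a b (n + 3) := by
  have ha₀ : 0 < a := by linarith
  have hc₀ : 0 < c := by linarith
  have hb₀ : 0 < b := by linarith
  have hdiff : ∀ k, coeffAB a c k - coeffAB a b k =
      (a ^ quarterSquare k)⁻¹ * (c⁻¹ ^ quarterSquare (k - 1) - b⁻¹ ^ quarterSquare (k - 1)) := by
    intro k
    rw [coeffAB_eq_s11 ha₀.ne' hc₀.ne', coeffAB_eq_s11 ha₀.ne' hb₀.ne', mul_inv, mul_inv, inv_pow, inv_pow]
    ring
  have hbc : b⁻¹ ≤ c⁻¹ := inv_anti₀ hc₀ hcb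
  have hpow : c⁻¹ ^ quarterSquare (n + 3) - b⁻¹ ^ quarterSquare (n + 3) ≤
      c⁻¹ ^ quarterSquare (n + 2) - b⁻¹ ^ quarterSquare (n + 2) := by
    refine pow_sub_pow_antitoneOn (inv_nonneg.mpr hb₀.le) hbc
      (by linarith [inv_anti₀ two_pos hc]) ?_ ?_ ?_ <;>
    simp only [Set.mem_Ici, quarterSquare] <;> omega
  have hexp : a ^ quarterSquare (n + 4) = a ^ quarterSquare (n + 3) * a ^ 2 * a ^ (n / 2) := by
    rw [← pow_add, ← pow_add]
    congr 1
    simp only [quarterSquare]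
    omega
  have ha2 : (a ^ quarterSquare (n + 4))⁻¹ * a ^ 2 ≤ (a ^ quarterSquare (n + 3))⁻¹ := by
    rw [hexp, mul_inv, mul_inv, mul_right_comm, inv_mul_cancel_right₀ (by positivity)]
    exact mul_le_of_le_one_right (by positivity) (inv_le_one_of_one_le₀ (one_le_pow₀ ha))
  rw [hdiff, hdiff, mul_right_comm]
  exact mul_le_mul ha2 hpow (sub_nonneg.mpr (pow_le_pow_left₀ (by positivity) hbc _))
    (by positivity)

lemma coeffAB_sub_mul_pow_succ_le {x : ℝ} (ha : 1 ≤ a) (hc : 2 ≤ c) (hcb : c ≤ b) (hx : 0 ≤ x)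
    (hxa : x ≤ a ^ 2) (n : ℕ) :
    (coeffAB a c (n + 4) - coeffAB a b (n + 4)) * x ^ (n + 4) ≤
      (coeffAB a c (n + 3) - coeffAB a b (n + 3)) * x ^ (n + 3) := by
  have hd : 0 ≤ coeffAB a c (n + 4) - coeffAB a b (n + 4) :=
    sub_nonneg.mpr (coeffAB_le_coeffAB_of_le (by linarith) (by linarith) hcb _)
  calc (coeffAB a c (n + 4) - coeffAB a b (n + 4)) * x ^ (n + 4)
      = (coeffAB a c (n + 4) - coeffAB a b (n + 4)) * x * x ^ (n + 3) := by ring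
    _ ≤ (coeffAB a c (n + 4) - coeffAB a b (n + 4)) * a ^ 2 * x ^ (n + 3) := by gcongr
    _ ≤ (coeffAB a c (n + 3) - coeffAB a b (n + 3)) * x ^ (n + 3) :=
      mul_le_mul_of_nonneg_right (coeffAB_sub_succ_mul_sq_le ha hc hcb n) (by positivity)

lemma phiAB_sub_phiAB (ha : 1 < a) (hb : 1 ≤ b) (hc : 1 ≤ c) (x : ℝ) :
    phiAB a b x - phiAB a c x =
      ∑' n, (-1) ^ n * ((coeffAB a c (n + 3) - coeffAB a b (n + 3)) * x ^ (n + 3)) := by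
  have hsum : ∀ {b : ℝ}, 1 ≤ b → Summable fun k => (-1 : ℝ) ^ k * coeffAB a b k * x ^ k :=
    fun hb => (summable_coeffAB_mul_pow ha hb (-x)).congr fun k => by rw [neg_pow]; ring
  rw [phiAB, phiAB, ← (hsum hb).tsum_sub (hsum hc),
    ← ((hsum hb).sub (hsum hc)).sum_add_tsum_nat_add 3,
    Finset.sum_eq_zero fun k hk => by
      rw [coeffAB_eq_of_lt_three a b c (Finset.mem_range.mp hk)]; ring,
    zero_add]
  exact tsum_congr fun n => by ring

end coeffAB

/-- For `3 ≤ a < c < b` and `x ∈ (1, a]`, one has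
`φ_{a,c}(x) ≤ φ_{a,b}(x)`: for fixed `a` and `x ∈ (1, a]`, `φ_{a,b}(x)` is
non-decreasing in the second parameter. -/
theorem phiAB_mono_snd (a b c : ℝ) (ha : 3 ≤ a) (hac : a < c) (hcb : c < b) :
    ∀ x ∈ Set.Ioc (1 : ℝ) a, phiAB a c x ≤ phiAB a b x := by
  rintro x ⟨hx1, hxa⟩
  have hc : 2 ≤ c := by linarith
  have hterms : Antitone fun n => (coeffAB a c (n + 3) - coeffAB a b (n + 3)) * x ^ (n + 3) :=
    antitone_nat_of_succ_le fun n =>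
      coeffAB_sub_mul_pow_succ_le (by linarith) hc hcb.le (by linarith) (by nlinarith) n
  have hsum : Summable fun n => (coeffAB a c (n + 3) - coeffAB a b (n + 3)) * x ^ (n + 3) := by
    simpa only [sub_mul] using (summable_nat_add_iff 3).mpr
      ((summable_coeffAB_mul_pow (by linarith) (by linarith) x).sub
        (summable_coeffAB_mul_pow (a := a) (b := b) (by linarith) (by linarith) x))
  linarith [hterms.tsum_alternating_nonneg hsum,
    phiAB_sub_phiAB (a := a) (b := b) (c := c) (by linarith) (by linarith) (by linarith) x]
end

section
/- Let a, b be real numbers with a ≥ 3 and b > a. Then the self-reciprocal quartic polynomial P(w) = w⁴ − a√b·w³ + ab·w² − a√b·w + 1 has no zeros on the unit circle {w ∈ ℂ : |w| = 1}, and it has exactly two zeros, counted with multiplicity, in the open unit disk {w ∈ ℂ : |w| < 1}. -/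
/-!
On the unit circle `w⁻¹ = conj w`, so `x = w + w⁻¹ = 2 Re w` is real with `|x| ≤ 2`, and
`P(w) = w² (x² − a√b x + ab − 2)`; the real quadratic is positive on `[-2, 2]`, so `P` has no
zeros there. Over `ℂ`, a self-reciprocal quartic is a product of two quadratics `X² − uX + 1`,
whose zeros `v, 1/v` have reciprocal moduli: with none of modulus one, exactly one zero of each
quadratic lies in the open disk.
-/

open Polynomial

noncomputable def selfReciprocalQuartic {R : Type*} [CommRing R] (s c : R) : R[X] :=
  X ^ 4 - C s * X ^ 3 + C c * X ^ 2 - C s * X + 1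

theorem eval_selfReciprocalQuartic {K : Type*} [Field K] (s c : K) {z : K} (hz : z ≠ 0) :
    (selfReciprocalQuartic s c).eval z =
      z ^ 2 * ((z + z⁻¹) ^ 2 - s * (z + z⁻¹) + (c - 2)) := by
  simp only [selfReciprocalQuartic, eval_add, eval_sub, eval_mul, eval_pow, eval_X, eval_C,
    eval_one]
  field_simp
  ring

theorem eval_selfReciprocalQuartic_ne_zero_of_norm_eq_one {s c : ℝ}
    (hpos : ∀ x : ℝ, |x| ≤ 2 → 0 < x ^ 2 - s * x + (c - 2)) {z : ℂ} (hz : ‖z‖ = 1) :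
    (selfReciprocalQuartic (s : ℂ) c).eval z ≠ 0 := by
  have hz₀ : z ≠ 0 := norm_ne_zero_iff.mp (by simp [hz])
  have hx : z + z⁻¹ = (2 * z.re : ℝ) := by rw [Complex.inv_eq_conj hz, Complex.add_conj]
  have hx₂ : |2 * z.re| ≤ 2 := by
    rw [abs_mul, abs_two]; linarith [Complex.abs_re_le_norm z]
  rw [eval_selfReciprocalQuartic _ _ hz₀, hx]
  exact mul_ne_zero (pow_ne_zero 2 hz₀) (by exact_mod_cast (hpos _ hx₂).ne')

/-- The vertex `a t / 2` lies to the right of `2`, so on `[-2, 2]` the quadratic is smallest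
at `x = 2`, where it equals `a t (t - 2) + 2`. -/
theorem sq_sub_mul_add_pos {a t x : ℝ} (ha : 3 ≤ a) (ht : 0 ≤ t) (hat : a < t ^ 2)
    (hx : |x| ≤ 2) : 0 < x ^ 2 - a * t * x + (a * t ^ 2 - 2) := by
  obtain ⟨hx₁, hx₂⟩ := abs_le.mp hx
  have ht₁ : 1 < t := by nlinarith
  have hat₄ : 4 < a * t := by nlinarith
  have hmin : 4 - 2 * (a * t) ≤ x ^ 2 - a * t * x := by
    nlinarith [mul_nonneg (by linarith : (0:ℝ) ≤ 2 - x) (by linarith : (0:ℝ) ≤ a * t - 2 - x)]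
  have hend : 0 < a * t ^ 2 - 2 * (a * t) + 2 := by
    rcases le_or_gt 2 t with h | h
    · nlinarith
    · nlinarith [mul_pos (sub_pos.2 hat) (mul_pos (by linarith : (0:ℝ) < t) (sub_pos.2 h))]
  linarith

theorem selfReciprocalQuartic_eq_mul {R : Type*} [CommRing R] {s c v₁ w₁ v₂ w₂ : R}
    (h₁ : v₁ * w₁ = 1) (h₂ : v₂ * w₂ = 1) (hs : v₁ + w₁ + (v₂ + w₂) = s)
    (hc : (v₁ + w₁) * (v₂ + w₂) = c - 2) :
    selfReciprocalQuartic s c = (X - C v₁) * (X - C w₁) * ((X - C v₂) * (X - C w₂)) := by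
  rw [eq_sub_iff_add_eq] at hc
  subst hs hc
  simp only [selfReciprocalQuartic, map_add, map_mul, map_ofNat]
  have hC₁ : C v₁ * C w₁ = 1 := by rw [← C_mul, h₁, C_1]
  have hC₂ : C v₂ * C w₂ = 1 := by rw [← C_mul, h₂, C_1]
  linear_combination (-(X ^ 2 - (C v₂ + C w₂) * X + C v₂ * C w₂)) * hC₁ -
    (X ^ 2 - (C v₁ + C w₁) * X + 1) * hC₂

theorem IsAlgClosed.exists_add_eq_and_mul_eq {K : Type*} [Field K] [IsAlgClosed K] (u p : K) :
    ∃ v w : K, v + w = u ∧ v * w = p := by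
  have hdeg : (X ^ 2 - C u * X + C p).degree = 2 := by compute_degree!
  obtain ⟨v, hv⟩ := IsAlgClosed.exists_root (X ^ 2 - C u * X + C p) (by simp [hdeg])
  refine ⟨v, u - v, by ring, ?_⟩
  simp only [IsRoot, eval_add, eval_sub, eval_mul, eval_pow, eval_X, eval_C] at hv
  linear_combination -hv

theorem exists_roots_selfReciprocalQuartic {K : Type*} [Field K] [IsAlgClosed K] (s c : K) :
    ∃ v₁ w₁ v₂ w₂ : K, v₁ * w₁ = 1 ∧ v₂ * w₂ = 1 ∧
      (selfReciprocalQuartic s c).roots = {v₁, w₁} + {v₂, w₂} := by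
  obtain ⟨u₁, u₂, hs, hc⟩ := IsAlgClosed.exists_add_eq_and_mul_eq s (c - 2)
  obtain ⟨v₁, w₁, hu₁, h₁⟩ := IsAlgClosed.exists_add_eq_and_mul_eq u₁ 1
  obtain ⟨v₂, w₂, hu₂, h₂⟩ := IsAlgClosed.exists_add_eq_and_mul_eq u₂ 1
  have hroots : ∀ v w : K, ((X - C v) * (X - C w)).roots = {v, w} := fun v w => by
    rw [roots_mul (mul_ne_zero (X_sub_C_ne_zero v) (X_sub_C_ne_zero w)), roots_X_sub_C,
      roots_X_sub_C]
    rfl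
  refine ⟨v₁, w₁, v₂, w₂, h₁, h₂, ?_⟩
  rw [selfReciprocalQuartic_eq_mul h₁ h₂ (by rw [hu₁, hu₂, hs]) (by rw [hu₁, hu₂, hc]),
    roots_mul ((monic_X_sub_C v₁).mul (monic_X_sub_C w₁) |>.mul
      ((monic_X_sub_C v₂).mul (monic_X_sub_C w₂))).ne_zero, hroots, hroots]

theorem card_filter_norm_lt_one_pair {𝕜 : Type*} [NormedDivisionRing 𝕜] {v w : 𝕜}
    (h : v * w = 1) (hv : ‖v‖ ≠ 1) :
    Multiset.card (({v, w} : Multiset 𝕜).filter fun z => ‖z‖ < 1) = 1 := by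
  have hvw : ‖v‖ * ‖w‖ = 1 := by rw [← norm_mul, h, norm_one]
  rcases hv.lt_or_gt with hv | hv
  · have hw : 1 < ‖w‖ := by nlinarith [norm_nonneg v]
    simp [hv, hw.le]
  · have hw : ‖w‖ < 1 := by nlinarith [norm_nonneg w]
    simp [Multiset.filter_singleton, hv.le, hw]

theorem card_roots_selfReciprocalQuartic_filter_norm_lt_one {s c : ℂ}
    (h : ∀ z : ℂ, ‖z‖ = 1 → (selfReciprocalQuartic s c).eval z ≠ 0) :
    Multiset.card ((selfReciprocalQuartic s c).roots.filter fun z => ‖z‖ < 1) = 2 := by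
  obtain ⟨v₁, w₁, v₂, w₂, h₁, h₂, hroots⟩ := exists_roots_selfReciprocalQuartic s c
  have hne : ∀ z ∈ (selfReciprocalQuartic s c).roots, ‖z‖ ≠ 1 := fun z hz hz₁ =>
    h z hz₁ (isRoot_of_mem_roots hz)
  rw [hroots, Multiset.filter_add, Multiset.card_add,
    card_filter_norm_lt_one_pair h₁ (hne v₁ (by simp [hroots])),
    card_filter_norm_lt_one_pair h₂ (hne v₂ (by simp [hroots]))]

/-- For `a ≥ 3` and `b > a`, the self-reciprocal quartic
`P(w) = w⁴ − a√b·w³ + ab·w² − a√b·w + 1` has no zeros on the unit circle and has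
exactly two zeros (with multiplicity) in the open unit disk. -/
theorem quartic_two_zeros_in_disk (a b : ℝ) (ha : 3 ≤ a) (hab : a < b) :
    (∀ z : ℂ, ‖z‖ = 1 →
        Polynomial.eval z
          (Polynomial.X ^ 4 - Polynomial.C ((a * Real.sqrt b : ℝ) : ℂ) * Polynomial.X ^ 3 +
            Polynomial.C ((a * b : ℝ) : ℂ) * Polynomial.X ^ 2 -
            Polynomial.C ((a * Real.sqrt b : ℝ) : ℂ) * Polynomial.X + 1) ≠ 0) ∧
      Multiset.card
        ((Polynomial.X ^ 4 - Polynomial.C ((a * Real.sqrt b : ℝ) : ℂ) * Polynomial.X ^ 3 +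
            Polynomial.C ((a * b : ℝ) : ℂ) * Polynomial.X ^ 2 -
            Polynomial.C ((a * Real.sqrt b : ℝ) : ℂ) * Polynomial.X + 1).roots.filter
          fun z => ‖z‖ < 1) = 2 := by
  change (∀ z : ℂ, ‖z‖ = 1 → (selfReciprocalQuartic _ _).eval z ≠ 0) ∧
    Multiset.card ((selfReciprocalQuartic _ _).roots.filter fun z => ‖z‖ < 1) = 2
  have hsqrt : Real.sqrt b ^ 2 = b := Real.sq_sqrt (by linarith)
  have hpos (x : ℝ) (hx : |x| ≤ 2) : 0 < x ^ 2 - a * Real.sqrt b * x + (a * b - 2) := by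
    simpa only [hsqrt] using sq_sub_mul_add_pos ha (Real.sqrt_nonneg b) (hsqrt.symm ▸ hab) hx
  have hcircle (z : ℂ) (hz : ‖z‖ = 1) := eval_selfReciprocalQuartic_ne_zero_of_norm_eq_one hpos hz
  exact ⟨hcircle, card_roots_selfReciprocalQuartic_filter_norm_lt_one hcircle⟩
end
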